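/- arXiv:1803.03611 — 4 statements merged into one kernel-verified Lean document; each statement's English description precedes it below -/
import Mathlib

section
/- For integers K ≥ 2 and d ≥ 1, the number N_d of integer points z ∈ Z^K with Σ_k z_k = 0 and Σ_k |z_k| = 2d equals Σ_{r=1}^{K-1} C(K,r)·C(d+r-1, r-1)·C(d-1, K-r-1). -/
open Finset

lemma my_W_eq (β : Type*) [Fintype β] [DecidableEq β] (n : ℕ) :
    Nat.card {a : β → ℕ // ∑ k, a k = n} = (Fintype.card β + n - 1).choose n := by
  have h1 : Nat.card {a : β → ℕ // ∑ k, a k = n}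
      = (Finset.piAntidiag (univ : Finset β) n).card := by
    rw [← Nat.card_eq_finsetCard]
    exact Nat.card_congr (Equiv.subtypeEquivRight (fun a => by simp))
  rw [h1, ← Finset.map_sym_eq_piAntidiag, Finset.card_map, Finset.sym_univ, Finset.card_univ,
    Sym.card_sym_eq_choose]

lemma my_Sc_eq (β : Type*) [Fintype β] [DecidableEq β] (n : ℕ) (hn : 1 ≤ n)
    (hβ : 1 ≤ Fintype.card β) :
    Nat.card {b : β → ℕ // (∑ k, b k) + Fintype.card β = n}
      = (n - 1).choose (Fintype.card β - 1) := by
  set m := Fintype.card β with hm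
  rcases le_or_gt m n with h | h
  · have e : {b : β → ℕ // (∑ k, b k) + m = n} ≃ {b : β → ℕ // ∑ k, b k = n - m} :=
      Equiv.subtypeEquivRight (fun b => by omega)
    rw [Nat.card_congr e, my_W_eq, ← hm]
    have h2 : m + (n - m) - 1 = n - 1 := by omega
    rw [h2, ← Nat.choose_symm (by omega : m - 1 ≤ n - 1)]
    congr 1
    omega
  · have : IsEmpty {b : β → ℕ // (∑ k, b k) + m = n} := by
      constructor; rintro ⟨b, hb⟩; omega
    rw [Nat.card_of_isEmpty]
    symm
    exact Nat.choose_eq_zero_of_lt (by omega)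

lemma my_card_sigma {ι : Type*} [Fintype ι] (f : ι → Type*) [∀ i, Finite (f i)] :
    Nat.card (Σ i, f i) = ∑ i, Nat.card (f i) := by
  letI : ∀ i, Fintype (f i) := fun i => Fintype.ofFinite _
  simp [Nat.card_eq_fintype_card, Fintype.card_sigma]

section fiber
variable {K : ℕ} (d : ℕ) (S : Finset (Fin K))

def myInv (a : {a : ↥S → ℕ // ∑ k, a k = d})
    (b : {b : ↥(Sᶜ) → ℕ // (∑ k, b k) + Fintype.card ↥(Sᶜ) = d}) : Fin K → ℤ :=
  fun k => if h : k ∈ S then (a.1 ⟨k, h⟩ : ℤ) else -((b.1 ⟨k, Finset.mem_compl.mpr h⟩ : ℤ) + 1)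

lemma myInv_sum_S (a : {a : ↥S → ℕ // ∑ k, a k = d})
    (b : {b : ↥(Sᶜ) → ℕ // (∑ k, b k) + Fintype.card ↥(Sᶜ) = d}) :
    ∑ k ∈ S, myInv d S a b k = (d : ℤ) := by
  rw [← Finset.sum_coe_sort]
  have : ∀ k : ↥S, myInv d S a b k.1 = (a.1 k : ℤ) := by
    intro k; simp [myInv, k.2]
  rw [Finset.sum_congr rfl (fun k _ => this k)]
  push_cast [← a.2]
  rfl

lemma myInv_sum_Sc (a : {a : ↥S → ℕ // ∑ k, a k = d})
    (b : {b : ↥(Sᶜ) → ℕ // (∑ k, b k) + Fintype.card ↥(Sᶜ) = d}) :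
    ∑ k ∈ Sᶜ, myInv d S a b k = -(d : ℤ) := by
  rw [← Finset.sum_coe_sort]
  have : ∀ k : ↥(Sᶜ), myInv d S a b k.1 = -((b.1 k : ℤ) + 1) := by
    intro k
    have hk : k.1 ∉ S := Finset.mem_compl.mp k.2
    simp [myInv, hk]
  rw [Finset.sum_congr rfl (fun k _ => this k), Finset.sum_neg_distrib]
  have : ∑ k : ↥(Sᶜ), ((b.1 k : ℤ) + 1) = (∑ k : ↥(Sᶜ), (b.1 k : ℤ)) + Fintype.card ↥(Sᶜ) := by
    rw [Finset.sum_add_distrib]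
    simp [Finset.card_univ, Finset.card_compl, Fintype.card_fin]
  rw [this]
  have hb := b.2
  push_cast [← hb]
  ring

end fiber

section fiber2
variable {K d : ℕ} {S : Finset (Fin K)}

lemma sgn_sums {z : Fin K → ℤ} (h0 : ∑ k, z k = 0) (h2 : ∑ k, |z k| = 2 * d)
    (hsgn : Finset.univ.filter (fun k => 0 ≤ z k) = S) :
    (∑ k ∈ S, z k = d) ∧ (∑ k ∈ Sᶜ, (-z k) = d) := by
  have hS : ∀ k ∈ S, 0 ≤ z k := by
    intro k hk; rw [← hsgn] at hk; exact (Finset.mem_filter.mp hk).2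
  have hSc : ∀ k ∈ Sᶜ, z k < 0 := by
    intro k hk
    have : k ∉ S := Finset.mem_compl.mp hk
    rw [← hsgn] at this
    simpa using this
  have hA : ∑ k ∈ S, z k + ∑ k ∈ Sᶜ, z k = 0 := by
    rw [Finset.sum_add_sum_compl]; exact h0
  have hB : ∑ k ∈ S, z k + ∑ k ∈ Sᶜ, (-z k) = 2 * d := by
    rw [← h2, ← Finset.sum_add_sum_compl S (fun k => |z k|)]
    congr 1
    · exact Finset.sum_congr rfl (fun k hk => (abs_of_nonneg (hS k hk)).symm)
    · exact Finset.sum_congr rfl (fun k hk => (abs_of_neg (hSc k hk)).symm)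
  have hneg : ∑ k ∈ Sᶜ, (-z k) = - ∑ k ∈ Sᶜ, z k := by rw [Finset.sum_neg_distrib]
  constructor <;> [skip; rw [hneg]] <;> omega

def fiberEquiv (K d : ℕ) (S : Finset (Fin K)) :
    {z : {z : Fin K → ℤ // ∑ k, z k = 0 ∧ ∑ k, |z k| = 2 * d} //
        Finset.univ.filter (fun k => 0 ≤ z.1 k) = S} ≃
      {a : ↥S → ℕ // ∑ k, a k = d} ×
        {b : ↥(Sᶜ) → ℕ // (∑ k, b k) + Fintype.card ↥(Sᶜ) = d} where
  toFun z :=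
    have hS : ∀ k ∈ S, 0 ≤ z.1.1 k := by
      intro k hk; rw [← z.2] at hk; exact (Finset.mem_filter.mp hk).2
    have hSc : ∀ k, k ∉ S → z.1.1 k < 0 := by
      intro k hk; rw [← z.2] at hk; simpa using hk
    have hsum := sgn_sums z.1.2.1 z.1.2.2 z.2
    ⟨⟨fun k => (z.1.1 k.1).toNat, by
      have : ((∑ k : ↥S, (z.1.1 k.1).toNat : ℕ) : ℤ) = ((d : ℕ) : ℤ) := by
        push_cast
        rw [Finset.sum_congr rfl (fun (k : ↥S) _ => Int.toNat_of_nonneg (hS k.1 k.2)),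
          Finset.sum_coe_sort]
        exact hsum.1
      exact_mod_cast this⟩,
    ⟨fun k => (-z.1.1 k.1 - 1).toNat, by
      have : (((∑ k : ↥(Sᶜ), (-z.1.1 k.1 - 1).toNat : ℕ) + Fintype.card ↥(Sᶜ) : ℕ) : ℤ)
          = ((d : ℕ) : ℤ) := by
        push_cast
        have he : ∀ k : ↥(Sᶜ), ((-z.1.1 k.1 - 1).toNat : ℤ) = -z.1.1 k.1 - 1 := by
          intro k
          have := hSc k.1 (Finset.mem_compl.mp k.2)
          exact Int.toNat_of_nonneg (by omega)
        rw [Finset.sum_congr rfl (fun (k : ↥(Sᶜ)) _ => he k)]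
        have : ∑ k : ↥(Sᶜ), (-z.1.1 k.1 - 1) =
            (∑ k : ↥(Sᶜ), (-z.1.1 k.1)) - Fintype.card ↥(Sᶜ) := by
          rw [Finset.sum_sub_distrib]
          simp [Finset.card_univ, Finset.card_compl, Fintype.card_fin]
        rw [this, Finset.sum_coe_sort Sᶜ (fun k => -z.1.1 k), hsum.2]
        ring
      exact_mod_cast this⟩⟩
  invFun ab :=
    ⟨⟨myInv d S ab.1 ab.2, by
      constructor
      · rw [← Finset.sum_add_sum_compl S, myInv_sum_S, myInv_sum_Sc]; ring
      · rw [← Finset.sum_add_sum_compl S (fun k => |myInv d S ab.1 ab.2 k|)]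
        have e1 : ∑ k ∈ S, |myInv d S ab.1 ab.2 k| = ∑ k ∈ S, myInv d S ab.1 ab.2 k := by
          refine Finset.sum_congr rfl (fun k hk => abs_of_nonneg ?_)
          simp [myInv, hk]
        have e2 : ∑ k ∈ Sᶜ, |myInv d S ab.1 ab.2 k| = ∑ k ∈ Sᶜ, -(myInv d S ab.1 ab.2 k) := by
          refine Finset.sum_congr rfl (fun k hk => abs_of_neg ?_)
          have hk' : k ∉ S := Finset.mem_compl.mp hk
          simp only [myInv, dif_neg hk']
          have h0 : (0:ℤ) ≤ (ab.2.1 ⟨k, Finset.mem_compl.mpr hk'⟩ : ℤ) := Int.natCast_nonneg _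
          linarith
        rw [e1, e2, Finset.sum_neg_distrib, myInv_sum_S, myInv_sum_Sc]
        ring⟩, by
      ext k
      simp only [Finset.mem_filter, Finset.mem_univ, true_and]
      constructor
      · intro h
        by_contra hk
        simp only [myInv, dif_neg hk] at h
        have : (0:ℤ) < (ab.2.1 ⟨k, Finset.mem_compl.mpr hk⟩ : ℤ) + 1 := by positivity
        omega
      · intro hk
        simp [myInv, dif_pos hk]⟩
  left_inv z := by
    apply Subtype.ext
    apply Subtype.ext
    funext k
    have hS : ∀ k ∈ S, 0 ≤ z.1.1 k := by
      intro k hk; rw [← z.2] at hk; exact (Finset.mem_filter.mp hk).2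
    have hSc : ∀ k, k ∉ S → z.1.1 k < 0 := by
      intro k hk; rw [← z.2] at hk; simpa using hk
    by_cases hk : k ∈ S
    · simp only [myInv, dif_pos hk]
      exact Int.toNat_of_nonneg (hS k hk)
    · simp only [myInv, dif_neg hk]
      have := hSc k hk
      rw [Int.toNat_of_nonneg (by omega)]
      ring
  right_inv ab := by
    ext k
    · simp only [myInv, dif_pos k.2]
      exact Int.toNat_natCast _
    · have hk : k.1 ∉ S := Finset.mem_compl.mp k.2
      simp only [myInv, dif_neg hk]
      have : -(-((ab.2.1 ⟨k.1, Finset.mem_compl.mpr hk⟩ : ℤ) + 1)) - 1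
          = (ab.2.1 ⟨k.1, Finset.mem_compl.mpr hk⟩ : ℤ) := by ring
      rw [this]
      simp
  
end fiber2

def myG (K d : ℕ) (r : ℕ) : ℕ :=
  if r = K then 0 else (r + d - 1).choose d * (d - 1).choose (K - r - 1)

theorem stmt_4 (K d : ℕ) (hK : 2 ≤ K) (hd : 1 ≤ d) :
    Nat.card {z : Fin K → ℤ // ∑ k, z k = 0 ∧ ∑ k, |z k| = 2 * d} =
      ∑ r ∈ Finset.Icc 1 (K - 1),
        K.choose r * (d + r - 1).choose (r - 1) * (d - 1).choose (K - r - 1) := by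
  haveI : Finite {z : Fin K → ℤ // ∑ k, z k = 0 ∧ ∑ k, |z k| = 2 * d} := by
    apply Finite.of_injective
      (fun z : {z : Fin K → ℤ // ∑ k, z k = 0 ∧ ∑ k, |z k| = 2 * d} =>
        fun k => (⟨z.1 k, by
        have hb : |z.1 k| ≤ ∑ j, |z.1 j| :=
          Finset.single_le_sum (f := fun j => |z.1 j|)
            (fun i _ => abs_nonneg _) (Finset.mem_univ k)
        rw [z.2.2] at hb
        exact Set.mem_Icc.mpr (abs_le.mp hb)⟩ : Set.Icc (-(2 * (d:ℤ))) (2 * d)))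
    intro z w h
    exact Subtype.ext (funext fun k => congrArg Subtype.val (congrFun h k))
  have h1 : Nat.card {z : Fin K → ℤ // ∑ k, z k = 0 ∧ ∑ k, |z k| = 2 * d}
      = ∑ S : Finset (Fin K),
          Nat.card {z : {z : Fin K → ℤ // ∑ k, z k = 0 ∧ ∑ k, |z k| = 2 * d} //
            Finset.univ.filter (fun k => 0 ≤ z.1 k) = S} := by
    rw [Nat.card_congr
      (Equiv.sigmaFiberEquiv
        (fun z : {z : Fin K → ℤ // ∑ k, z k = 0 ∧ ∑ k, |z k| = 2 * d} =>
          Finset.univ.filter (fun k => 0 ≤ z.1 k))).symm,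
      my_card_sigma]
  have h2 : ∀ S : Finset (Fin K),
      Nat.card {z : {z : Fin K → ℤ // ∑ k, z k = 0 ∧ ∑ k, |z k| = 2 * d} //
        Finset.univ.filter (fun k => 0 ≤ z.1 k) = S} = myG K d S.card := by
    intro S
    have hcard := Nat.card_congr (fiberEquiv K d S)
    rw [Nat.card_prod] at hcard
    by_cases hU : S = Finset.univ
    · subst hU
      have hKc : (Finset.univ : Finset (Fin K)).card = K := by simp
      haveI hIE : IsEmpty ↥((Finset.univ : Finset (Fin K))ᶜ) :=
        ⟨fun x => absurd x.2 (by simp)⟩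
      haveI hE : IsEmpty {b : ↥((Finset.univ : Finset (Fin K))ᶜ) → ℕ //
          (∑ k, b k) + Fintype.card ↥((Finset.univ : Finset (Fin K))ᶜ) = d} := by
        constructor
        rintro ⟨b, hb⟩
        have hc0 : Fintype.card ↥((Finset.univ : Finset (Fin K))ᶜ) = 0 := Fintype.card_eq_zero
        have hs : ∑ k : ↥((Finset.univ : Finset (Fin K))ᶜ), b k = 0 := by simp
        clear * - hb hc0 hs hd
        omega
      have hz : Nat.card {b : ↥((Finset.univ : Finset (Fin K))ᶜ) → ℕ //
          (∑ k, b k) + Fintype.card ↥((Finset.univ : Finset (Fin K))ᶜ) = d} = 0 :=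
        Nat.card_of_isEmpty
      rw [hcard, hz, mul_zero, hKc]
      simp [myG]
    · have hne : S.card ≠ K := by
        intro h
        exact hU (Finset.card_eq_iff_eq_univ S |>.mp (by simpa using h))
      have hc1 : Fintype.card ↥S = S.card := Fintype.card_coe S
      have hc2 : Fintype.card ↥(Sᶜ) = K - S.card := by
        rw [Fintype.card_coe, Finset.card_compl, Fintype.card_fin]
      have hpos : 1 ≤ Fintype.card ↥(Sᶜ) := by
        rw [hc2]
        have : S.card ≤ K := by
          simpa using Finset.card_le_card (Finset.subset_univ S)
        clear * - this hne
        omega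
      rw [hcard, my_W_eq, my_Sc_eq _ _ hd hpos, hc1, hc2]
      simp only [myG, if_neg hne]
  have h3 : (∑ S : Finset (Fin K),
      Nat.card {z : {z : Fin K → ℤ // ∑ k, z k = 0 ∧ ∑ k, |z k| = 2 * d} //
        Finset.univ.filter (fun k => 0 ≤ z.1 k) = S})
      = ∑ r ∈ Finset.range (K + 1), K.choose r • myG K d r := by
    rw [Finset.sum_congr rfl (fun S _ => h2 S)]
    have he : (∑ S : Finset (Fin K), myG K d S.card)
        = ∑ S ∈ (Finset.univ : Finset (Fin K)).powerset, myG K d S.card := by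
      rw [Finset.powerset_univ]
    rw [he, Finset.sum_powerset_apply_card]
    simp [Finset.card_univ, Fintype.card_fin]
  rw [h1, h3]
  rw [← Finset.sum_subset (by intro r hr; rw [Finset.mem_Icc] at hr; rw [Finset.mem_range]; clear * - hr hK; omega :
      Finset.Icc 1 (K - 1) ⊆ Finset.range (K + 1))]
  · refine Finset.sum_congr rfl (fun r hr => ?_)
    rw [Finset.mem_Icc] at hr
    have hrK : r ≠ K := by clear * - hr hK; omega
    simp only [myG, if_neg hrK, smul_eq_mul]
    have h4 : (r + d - 1).choose d = (d + r - 1).choose (r - 1) := by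
      rw [show r + d - 1 = d + r - 1 by clear * - hr hd; omega]
      rw [← Nat.choose_symm (by clear * - hr hd; omega : d ≤ d + r - 1)]
      congr 1
      clear * - hr hd
      omega
    rw [h4, mul_assoc]
  · intro r hr hnr
    rw [Finset.mem_range] at hr
    rw [Finset.mem_Icc] at hnr
    have : r = 0 ∨ r = K := by clear * - hr hnr hK; omega
    rcases this with rfl | rfl
    · have : (d - 1).choose d = 0 := Nat.choose_eq_zero_of_lt (by clear * - hd; omega)
      simp [myG, if_neg (by clear * - hK; omega : ¬ (0:ℕ) = K), this]
    · simp [myG]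
end

section
/- For integers K ≥ 2 and d ≥ 1, the combinatorial identity Σ_{r=1}^{K-1} C(K,r)·C(d+r-1,r-1)·C(d-1,K-r-1) = Σ_{j=0}^{K-1} C(K-1,j)^2 · C(d+K-j-2, K-2) holds. -/
open Finset



lemma vand (a b k : ℕ) :
    (a + b).choose k = ∑ i ∈ range (k + 1), a.choose i * b.choose (k - i) := by
  rw [Nat.add_choose_eq, Finset.Nat.sum_antidiagonal_eq_sum_range_succ_mk]

lemma cm (n a t : ℕ) :
    n.choose (a + t) * (a + t).choose a = n.choose a * (n - a).choose t := by
  rcases le_or_gt (a + t) n with h | h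
  · have := Nat.choose_mul (n := n) (Nat.le_add_right a t)
    simpa using this
  · rw [Nat.choose_eq_zero_of_lt h, Nat.zero_mul]
    rcases le_or_gt a n with h2 | h2
    · rw [Nat.choose_eq_zero_of_lt (by omega : n - a < t), Nat.mul_zero]
    · rw [Nat.choose_eq_zero_of_lt h2, Nat.zero_mul]

lemma prodP (e s u : ℕ) :
    e.choose s * e.choose u
      = ∑ t ∈ range (u + 1), e.choose (s + t) * (s + t).choose s * s.choose (u - t) := by
  have h1 : ∀ t, e.choose (s + t) * (s + t).choose s * s.choose (u - t)
      = e.choose s * ((e - s).choose t * s.choose (u - t)) := by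
    intro t; rw [cm]; ring
  rw [Finset.sum_congr rfl fun t _ => h1 t, ← Finset.mul_sum, ← vand]
  rcases le_or_gt s e with h | h
  · rw [Nat.sub_add_cancel h]
  · rw [Nat.choose_eq_zero_of_lt h, Nat.zero_mul, Nat.zero_mul]

lemma tri {M : Type*} [AddCommMonoid M] (n : ℕ) (f : ℕ → ℕ → M) :
    ∑ u ∈ range n, ∑ t ∈ range (u + 1), f u t
      = ∑ t ∈ range n, ∑ w ∈ range (n - t), f (t + w) t := by
  rw [Finset.sum_sigma', Finset.sum_sigma']
  apply Finset.sum_nbij' (i := fun p => ⟨p.2, p.1 - p.2⟩) (j := fun p => ⟨p.1 + p.2, p.1⟩)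
  · rintro ⟨u, t⟩ hp
    simp only [Finset.mem_sigma, Finset.mem_range] at hp ⊢
    omega
  · rintro ⟨t, w⟩ hp
    simp only [Finset.mem_sigma, Finset.mem_range] at hp ⊢
    omega
  · rintro ⟨u, t⟩ hp
    simp only [Finset.mem_sigma, Finset.mem_range] at hp
    dsimp only
    have h : t + (u - t) = u := by omega
    rw [h]
  · rintro ⟨t, w⟩ hp
    simp only [Finset.mem_sigma, Finset.mem_range] at hp
    dsimp only
    have h : t + w - t = w := by omega
    rw [h]
  · rintro ⟨u, t⟩ hp
    simp only [Finset.mem_sigma, Finset.mem_range] at hp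
    dsimp only
    have h : t + (u - t) = u := by omega
    rw [h]

lemma wsum (m s t : ℕ) (hs : s ≤ m) :
    ∑ w ∈ range (m + 1 - t), s.choose w * (m + 1 - s).choose (t + w + 1)
      = (m + 1).choose (s + t + 1) := by
  have hbig1 : ∑ w ∈ range (m + 1 - t), s.choose w * (m + 1 - s).choose (t + w + 1)
      = ∑ w ∈ range (s + m + 2), s.choose w * (m + 1 - s).choose (t + w + 1) := by
    apply Finset.sum_subset (Finset.range_subset_range.2 (by omega))
    intro w _ hw
    rw [Finset.mem_range, not_lt] at hw
    rw [Nat.choose_eq_zero_of_lt (show m + 1 - s < t + w + 1 by omega), Nat.mul_zero]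
  have h2 : (m + 1).choose (s + t + 1)
      = ∑ i ∈ range (s + t + 2), s.choose i * (m + 1 - s).choose (s + t + 1 - i) := by
    conv_lhs => rw [show m + 1 = s + (m + 1 - s) from by omega]
    exact vand _ _ _
  have h3 : ∑ i ∈ range (s + t + 2), s.choose i * (m + 1 - s).choose (s + t + 1 - i)
      = ∑ i ∈ range (s + 1), s.choose i * (m + 1 - s).choose (s + t + 1 - i) := by
    symm
    apply Finset.sum_subset (Finset.range_subset_range.2 (by omega))
    intro i _ hi
    rw [Finset.mem_range, not_lt] at hi
    rw [Nat.choose_eq_zero_of_lt (by omega), Nat.zero_mul]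
  have h4 : ∑ i ∈ range (s + 1), s.choose i * (m + 1 - s).choose (s + t + 1 - i)
      = ∑ i ∈ range (s + 1), s.choose i * (m + 1 - s).choose (t + i + 1) := by
    rw [← Finset.sum_range_reflect
      (fun i => s.choose i * (m + 1 - s).choose (s + t + 1 - i)) (s + 1)]
    apply Finset.sum_congr rfl
    intro i hi
    rw [Finset.mem_range] at hi
    rw [show s + 1 - 1 - i = s - i from by omega,
        show s + t + 1 - (s - i) = t + i + 1 from by omega,
        Nat.choose_symm (by omega : i ≤ s)]
  have h5 : ∑ i ∈ range (s + 1), s.choose i * (m + 1 - s).choose (t + i + 1)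
      = ∑ i ∈ range (s + m + 2), s.choose i * (m + 1 - s).choose (t + i + 1) := by
    apply Finset.sum_subset (Finset.range_subset_range.2 (by omega))
    intro i _ hi
    rw [Finset.mem_range, not_lt] at hi
    rw [Nat.choose_eq_zero_of_lt (by omega), Nat.zero_mul]
  rw [hbig1, ← h5, ← h4, ← h3, ← h2]

lemma ssum (m t : ℕ) :
    ∑ s ∈ range (t + 1), (m + 2).choose (s + 1) * t.choose s
      = (t + m + 2).choose (t + 1) := by
  have h := vand (m + 2) t (t + 1)
  rw [Finset.sum_range_succ'] at h
  rw [Nat.sub_zero, Nat.choose_succ_self, Nat.mul_zero, Nat.add_zero] at h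
  rw [show t + m + 2 = m + 2 + t from by ring, h]
  apply Finset.sum_congr rfl
  intro i hi
  rw [Finset.mem_range] at hi
  rw [show t + 1 - (i + 1) = t - i from by omega, Nat.choose_symm (by omega : i ≤ t)]

lemma rhs_eq (m e : ℕ) :
    ∑ j ∈ range (m + 2), (m + 1).choose j ^ 2 * (e + j).choose m
      = ∑ t ∈ range (m + 1),
          e.choose t * ((m + 1).choose (t + 1) * (t + m + 2).choose (t + 1)) := by
  have step1 : ∑ j ∈ range (m + 2), (m + 1).choose j ^ 2 * (e + j).choose m
      = ∑ j ∈ range (m + 2), ∑ a ∈ range (m + 1),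
          (m + 1).choose j ^ 2 * (e.choose a * j.choose (m - a)) := by
    apply Finset.sum_congr rfl
    intro j _
    rw [vand e j m, Finset.mul_sum]
  rw [step1, Finset.sum_comm]
  apply Finset.sum_congr rfl
  intro a ha
  rw [Finset.mem_range] at ha
  have ha' : a ≤ m := by omega
  have hsub : ∑ j ∈ Finset.Ico (m - a) (m + 2),
        (m + 1).choose j ^ 2 * (e.choose a * j.choose (m - a))
      = ∑ j ∈ range (m + 2), (m + 1).choose j ^ 2 * (e.choose a * j.choose (m - a)) := by
    apply Finset.sum_subset
    · rw [Finset.range_eq_Ico]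
      exact Finset.Ico_subset_Ico (Nat.zero_le _) le_rfl
    · intro j hj hj2
      rw [Finset.mem_range] at hj
      rw [Finset.mem_Ico, not_and] at hj2
      rw [Nat.choose_eq_zero_of_lt (show j < m - a by omega), Nat.mul_zero, Nat.mul_zero]
  rw [← hsub, Finset.sum_Ico_eq_sum_range,
      show m + 2 - (m - a) = a + 1 + 1 from by omega]
  have hterm : ∀ v ∈ range (a + 1 + 1),
      (m + 1).choose (m - a + v) ^ 2 * (e.choose a * (m - a + v).choose (m - a))
        = e.choose a * (m + 1).choose (m - a)
            * ((a + 1).choose v * (m + 1).choose (a + 1 - v)) := by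
    intro v hv
    rw [Finset.mem_range] at hv
    have h1 : (m + 1).choose (m - a + v) * (m - a + v).choose (m - a)
        = (m + 1).choose (m - a) * (a + 1).choose v := by
      have h := cm (m + 1) (m - a) v
      rw [show m + 1 - (m - a) = a + 1 from by omega] at h
      exact h
    have h2 : (m + 1).choose (m - a + v) = (m + 1).choose (a + 1 - v) := by
      rw [show m - a + v = m + 1 - (a + 1 - v) from by omega,
          Nat.choose_symm (show a + 1 - v ≤ m + 1 by omega)]
    calc (m + 1).choose (m - a + v) ^ 2 * (e.choose a * (m - a + v).choose (m - a))
        = (m + 1).choose (m - a + v) * (m - a + v).choose (m - a)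
            * (m + 1).choose (m - a + v) * e.choose a := by rw [pow_two]; ring
      _ = (m + 1).choose (m - a) * (a + 1).choose v
            * (m + 1).choose (a + 1 - v) * e.choose a := by rw [h1, h2]
      _ = e.choose a * (m + 1).choose (m - a)
            * ((a + 1).choose v * (m + 1).choose (a + 1 - v)) := by ring
  rw [Finset.sum_congr rfl hterm, ← Finset.mul_sum, ← vand,
      show a + 1 + (m + 1) = a + m + 2 from by ring,
      show m - a = m + 1 - (a + 1) from by omega,
      Nat.choose_symm (show a + 1 ≤ m + 1 by omega), mul_assoc]

lemma lhs_eq (m e : ℕ) :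
    ∑ i ∈ range (m + 1), (m + 2).choose (i + 1) * (e + i + 1).choose i * e.choose (m - i)
      = ∑ t ∈ range (m + 1),
          e.choose t * ((m + 1).choose (t + 1) * (t + m + 2).choose (t + 1)) := by
  calc
    ∑ i ∈ range (m + 1), (m + 2).choose (i + 1) * (e + i + 1).choose i * e.choose (m - i)
      = ∑ i ∈ range (m + 1), ∑ s ∈ range (i + 1),
          (m + 2).choose (i + 1) * (e.choose s * (i + 1).choose (s + 1))
            * e.choose (m - i) := by
        apply Finset.sum_congr rfl
        intro i _
        rw [show e + i + 1 = e + (i + 1) from by ring, vand e (i + 1) i,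
          Finset.mul_sum, Finset.sum_mul]
        apply Finset.sum_congr rfl
        intro s hs
        rw [Finset.mem_range] at hs
        rw [show i - s = i + 1 - (s + 1) from by omega,
          Nat.choose_symm (show s + 1 ≤ i + 1 by omega)]
    _ = ∑ i ∈ range (m + 1), ∑ s ∈ range (m + 1),
          (m + 2).choose (i + 1) * (e.choose s * (i + 1).choose (s + 1))
            * e.choose (m - i) := by
        apply Finset.sum_congr rfl
        intro i hi
        rw [Finset.mem_range] at hi
        apply Finset.sum_subset (Finset.range_subset_range.2 (by omega))
        intro s _ hs
        rw [Finset.mem_range, not_lt] at hs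
        rw [Nat.choose_eq_zero_of_lt (show i + 1 < s + 1 by omega), Nat.mul_zero,
          Nat.mul_zero, Nat.zero_mul]
    _ = ∑ s ∈ range (m + 1), ∑ i ∈ range (m + 1),
          (m + 2).choose (i + 1) * (e.choose s * (i + 1).choose (s + 1))
            * e.choose (m - i) := Finset.sum_comm
    _ = ∑ s ∈ range (m + 1),
          e.choose s * (m + 2).choose (s + 1) * (m + 1 - s + e).choose (m - s) := by
        apply Finset.sum_congr rfl
        intro s hs
        rw [Finset.mem_range] at hs
        have hshrink : ∑ i ∈ Finset.Ico s (m + 1),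
              (m + 2).choose (i + 1) * (e.choose s * (i + 1).choose (s + 1))
                * e.choose (m - i)
            = ∑ i ∈ range (m + 1),
              (m + 2).choose (i + 1) * (e.choose s * (i + 1).choose (s + 1))
                * e.choose (m - i) := by
          apply Finset.sum_subset
          · rw [Finset.range_eq_Ico]
            exact Finset.Ico_subset_Ico (Nat.zero_le _) le_rfl
          · intro i hi hi2
            rw [Finset.mem_range] at hi
            rw [Finset.mem_Ico, not_and] at hi2
            rw [Nat.choose_eq_zero_of_lt (show i + 1 < s + 1 by omega), Nat.mul_zero,
              Nat.mul_zero, Nat.zero_mul]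
        rw [← hshrink, Finset.sum_Ico_eq_sum_range]
        have hterm : ∀ u ∈ range (m + 1 - s),
            (m + 2).choose (s + u + 1) * (e.choose s * (s + u + 1).choose (s + 1))
              * e.choose (m - (s + u))
            = e.choose s * (m + 2).choose (s + 1)
                * ((m + 1 - s).choose u * e.choose (m - s - u)) := by
          intro u hu
          have h1 : (m + 2).choose (s + 1 + u) * (s + 1 + u).choose (s + 1)
              = (m + 2).choose (s + 1) * (m + 1 - s).choose u := by
            have h := cm (m + 2) (s + 1) u
            rw [show m + 2 - (s + 1) = m + 1 - s from by omega] at h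
            exact h
          calc (m + 2).choose (s + u + 1) * (e.choose s * (s + u + 1).choose (s + 1))
                * e.choose (m - (s + u))
              = (m + 2).choose (s + 1 + u) * (s + 1 + u).choose (s + 1)
                  * (e.choose s * e.choose (m - s - u)) := by
                rw [show s + u + 1 = s + 1 + u from by ring, Nat.sub_sub]
                ring
            _ = e.choose s * (m + 2).choose (s + 1)
                  * ((m + 1 - s).choose u * e.choose (m - s - u)) := by
                rw [h1]; ring
        rw [Finset.sum_congr rfl hterm, ← Finset.mul_sum,
          show m + 1 - s = m - s + 1 from by omega, ← vand]
    _ = ∑ s ∈ range (m + 1), ∑ u ∈ range (m + 1),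
          (m + 2).choose (s + 1) * (m + 1 - s).choose (u + 1)
            * (e.choose s * e.choose u) := by
        apply Finset.sum_congr rfl
        intro s hs
        rw [Finset.mem_range] at hs
        rw [show m + 1 - s + e = e + (m + 1 - s) from by ring, vand e (m + 1 - s) (m - s)]
        have hterm : ∀ u ∈ range (m - s + 1),
            e.choose u * (m + 1 - s).choose (m - s - u)
              = e.choose u * (m + 1 - s).choose (u + 1) := by
          intro u hu
          rw [Finset.mem_range] at hu
          rw [show m - s - u = m + 1 - s - (u + 1) from by omega,
            Nat.choose_symm (show u + 1 ≤ m + 1 - s by omega)]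
        rw [Finset.sum_congr rfl hterm]
        have hext : ∑ u ∈ range (m - s + 1), e.choose u * (m + 1 - s).choose (u + 1)
            = ∑ u ∈ range (m + 1), e.choose u * (m + 1 - s).choose (u + 1) := by
          apply Finset.sum_subset (Finset.range_subset_range.2 (by omega))
          intro u _ hu
          rw [Finset.mem_range, not_lt] at hu
          rw [Nat.choose_eq_zero_of_lt (show m + 1 - s < u + 1 by omega), Nat.mul_zero]
        rw [hext, Finset.mul_sum]
        apply Finset.sum_congr rfl
        intro u _
        ring
    _ = ∑ s ∈ range (m + 1), ∑ u ∈ range (m + 1), ∑ t ∈ range (u + 1),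
          (m + 2).choose (s + 1) * (m + 1 - s).choose (u + 1)
            * (e.choose (s + t) * (s + t).choose s * s.choose (u - t)) := by
        apply Finset.sum_congr rfl
        intro s _
        apply Finset.sum_congr rfl
        intro u _
        rw [prodP e s u, Finset.mul_sum]
    _ = ∑ s ∈ range (m + 1), ∑ t ∈ range (m + 1), ∑ w ∈ range (m + 1 - t),
          (m + 2).choose (s + 1) * (m + 1 - s).choose (t + w + 1)
            * (e.choose (s + t) * (s + t).choose s * s.choose (t + w - t)) := by
        apply Finset.sum_congr rfl
        intro s _
        exact tri (m + 1) (fun u t =>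
          (m + 2).choose (s + 1) * (m + 1 - s).choose (u + 1)
            * (e.choose (s + t) * (s + t).choose s * s.choose (u - t)))
    _ = ∑ s ∈ range (m + 1), ∑ t ∈ range (m + 1),
          (m + 2).choose (s + 1) * (e.choose (s + t) * (s + t).choose s)
            * (m + 1).choose (s + t + 1) := by
        apply Finset.sum_congr rfl
        intro s hs
        rw [Finset.mem_range] at hs
        apply Finset.sum_congr rfl
        intro t _
        have hterm : ∀ w ∈ range (m + 1 - t),
            (m + 2).choose (s + 1) * (m + 1 - s).choose (t + w + 1)
              * (e.choose (s + t) * (s + t).choose s * s.choose (t + w - t))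
            = (m + 2).choose (s + 1) * (e.choose (s + t) * (s + t).choose s)
                * (s.choose w * (m + 1 - s).choose (t + w + 1)) := by
          intro w _
          rw [show t + w - t = w from by omega]
          ring
        rw [Finset.sum_congr rfl hterm, ← Finset.mul_sum, wsum m s t (by omega)]
    _ = ∑ s ∈ range (m + 1), ∑ t ∈ range (m + 1 - s),
          (m + 2).choose (s + 1) * (e.choose (s + t) * (s + t).choose s)
            * (m + 1).choose (s + t + 1) := by
        apply Finset.sum_congr rfl
        intro s hs
        rw [Finset.mem_range] at hs
        symm
        apply Finset.sum_subset (Finset.range_subset_range.2 (by omega))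
        intro t _ ht
        rw [Finset.mem_range, not_lt] at ht
        rw [Nat.choose_eq_zero_of_lt (show m + 1 < s + t + 1 by omega), Nat.mul_zero]
    _ = ∑ t ∈ range (m + 1), ∑ s ∈ range (t + 1),
          (m + 2).choose (s + 1) * (e.choose t * t.choose s)
            * (m + 1).choose (t + 1) := by
        exact (tri (m + 1) (fun u v =>
          (m + 2).choose (v + 1) * (e.choose u * u.choose v)
            * (m + 1).choose (u + 1))).symm
    _ = ∑ t ∈ range (m + 1),
          e.choose t * ((m + 1).choose (t + 1) * (t + m + 2).choose (t + 1)) := by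
        apply Finset.sum_congr rfl
        intro t _
        have hterm : ∀ s ∈ range (t + 1),
            (m + 2).choose (s + 1) * (e.choose t * t.choose s) * (m + 1).choose (t + 1)
            = e.choose t * (m + 1).choose (t + 1) * ((m + 2).choose (s + 1) * t.choose s) := by
          intro s _
          ring
        rw [Finset.sum_congr rfl hterm, ← Finset.mul_sum, ssum m t, mul_assoc]

theorem stmt_6 (K d : ℕ) (hK : 2 ≤ K) (hd : 1 ≤ d) :
    ∑ r ∈ Finset.Icc 1 (K - 1),
        K.choose r * (d + r - 1).choose (r - 1) * (d - 1).choose (K - r - 1) =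
      ∑ j ∈ Finset.range K, (K - 1).choose j ^ 2 * (d + K - j - 2).choose (K - 2) := by
  obtain ⟨m, rfl⟩ : ∃ m, K = m + 2 := ⟨K - 2, by omega⟩
  obtain ⟨e, rfl⟩ : ∃ e, d = e + 1 := ⟨d - 1, by omega⟩
  have hL : ∑ r ∈ Finset.Icc 1 (m + 2 - 1),
      (m + 2).choose r * (e + 1 + r - 1).choose (r - 1)
        * (e + 1 - 1).choose (m + 2 - r - 1)
      = ∑ i ∈ range (m + 1),
          (m + 2).choose (i + 1) * (e + i + 1).choose i * e.choose (m - i) := by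
    rw [show m + 2 - 1 = m + 1 from by omega, ← Finset.Ico_add_one_right_eq_Icc,
      Finset.sum_Ico_eq_sum_range, show m + 1 + 1 - 1 = m + 1 from by omega]
    apply Finset.sum_congr rfl
    intro i hi
    rw [Finset.mem_range] at hi
    rw [show e + 1 + (1 + i) - 1 = e + i + 1 from by omega,
      show 1 + i - 1 = i from by omega,
      show e + 1 - 1 = e from by omega,
      show m + 2 - (1 + i) - 1 = m - i from by omega,
      show 1 + i = i + 1 from by omega]
  have hR : ∑ j ∈ range (m + 2),
      (m + 2 - 1).choose j ^ 2 * (e + 1 + (m + 2) - j - 2).choose (m + 2 - 2)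
      = ∑ j ∈ range (m + 2), (m + 1).choose j ^ 2 * (e + j).choose m := by
    rw [← Finset.sum_range_reflect]
    apply Finset.sum_congr rfl
    intro j hj
    rw [Finset.mem_range] at hj
    rw [show m + 2 - 1 - j = m + 1 - j from by omega,
      show m + 2 - 1 = m + 1 from by omega,
      show m + 2 - 2 = m from by omega,
      show e + 1 + (m + 2) - (m + 1 - j) - 2 = e + j from by omega,
      Nat.choose_symm (show j ≤ m + 1 by omega)]
  rw [hL, hR]
  exact (lhs_eq m e).trans (rhs_eq m e).symm
end

section
/- For K ≥ 2 and real θ with |θ| < 1, the generating function of the counts N_d satisfies 1 + Σ_{d=1}^∞ N_d θ^d = S_{K-1}(θ) / (1-θ)^{K-1}, where S_{K-1}(θ) = Σ_{j=0}^{K-1} C(K-1,j)^2 θ^j. -/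
open Finset

lemma vand_range (a b m : ℕ) :
    ∑ t ∈ range (m+1), a.choose t * b.choose (m - t) = (a + b).choose m := by
  rw [Nat.add_choose_eq, Finset.Nat.sum_antidiagonal_eq_sum_range_succ_mk]

-- inner lemma A
lemma lemA (n j : ℕ) (hj : j ≤ n) :
    ∑ k ∈ range (n+1), n.choose k ^ 2 * k.choose j
      = n.choose j * (2*n - j).choose (n - j) := by
  have hzero : ∀ k ∈ range (n+1), k ∉ Ico j (n+1) →
      n.choose k ^ 2 * k.choose j = 0 := by
    intro k hk hk'
    simp only [mem_range, Nat.lt_succ_iff] at hk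
    simp only [mem_Ico, not_and, not_lt, Nat.lt_succ_iff] at hk'
    rcases lt_or_ge k j with h | h
    · rw [Nat.choose_eq_zero_of_lt h, mul_zero]
    · omega
  have hsub : Ico j (n+1) ⊆ range (n+1) := by
    intro k hk; simp only [mem_Ico] at hk; simp [hk.2]
  rw [← Finset.sum_subset hsub hzero, Finset.sum_Ico_eq_sum_range]
  have hr : n + 1 - j = (n - j) + 1 := by omega
  rw [hr]
  have hterm : ∀ t ∈ range ((n-j)+1),
      n.choose (j + t) ^ 2 * (j + t).choose j
        = n.choose j * ((n-j).choose t * n.choose ((n-j) - t)) := by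
    intro t ht
    simp only [mem_range, Nat.lt_succ_iff] at ht
    have h1 : j + t ≤ n := by omega
    have h2 : n.choose (j+t) * (j+t).choose j
        = n.choose j * (n - j).choose t := by
      rw [Nat.choose_mul (Nat.le_add_right j t)]
      congr 1
      simp
    have h3 : n.choose (j + t) = n.choose ((n-j) - t) := by
      rw [← Nat.choose_symm h1]
      congr 1
      omega
    calc n.choose (j + t) ^ 2 * (j + t).choose j
        = (n.choose (j+t) * (j+t).choose j) * n.choose (j+t) := by ring
      _ = (n.choose j * (n - j).choose t) * n.choose ((n-j) - t) := by rw [h2, h3]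
      _ = n.choose j * ((n-j).choose t * n.choose ((n-j) - t)) := by ring
  rw [Finset.sum_congr rfl hterm, ← Finset.mul_sum, vand_range]
  congr 2
  omega


lemma suranyi (n x : ℕ) (h : n ≤ x) :
    ∑ k ∈ range (n+1), n.choose k ^ 2 * (x + k).choose (2*n) = x.choose n ^ 2 := by
  have step1 : ∀ k, (x + k).choose (2*n)
      = ∑ j ∈ range (2*n+1), x.choose (2*n - j) * k.choose j := by
    intro k
    rw [Nat.add_choose_eq, Finset.Nat.sum_antidiagonal_eq_sum_range_succ_mk]
    rw [← Finset.sum_range_reflect]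
    apply Finset.sum_congr rfl
    intro j hj
    simp only [mem_range, Nat.lt_succ_iff] at hj
    have h1 : 2*n + 1 - 1 - j = 2*n - j := by omega
    have h2 : 2*n - (2*n - j) = j := by omega
    rw [h1, h2]
  calc
    ∑ k ∈ range (n+1), n.choose k ^ 2 * (x + k).choose (2*n)
      = ∑ k ∈ range (n+1), ∑ j ∈ range (2*n+1),
          x.choose (2*n - j) * (n.choose k ^ 2 * k.choose j) := by
        apply Finset.sum_congr rfl; intro k _
        rw [step1 k, Finset.mul_sum]
        apply Finset.sum_congr rfl; intro j _; ring
    _ = ∑ j ∈ range (2*n+1), x.choose (2*n - j)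
          * ∑ k ∈ range (n+1), n.choose k ^ 2 * k.choose j := by
        rw [Finset.sum_comm]
        apply Finset.sum_congr rfl; intro j _
        rw [Finset.mul_sum]
    _ = ∑ j ∈ range (n+1), x.choose (2*n - j)
          * ∑ k ∈ range (n+1), n.choose k ^ 2 * k.choose j := by
        symm
        apply Finset.sum_subset
        · intro j hj; simp only [mem_range] at hj ⊢; omega
        · intro j hj hj'
          simp only [mem_range] at hj hj'
          have hjn : n < j := by omega
          have : ∑ k ∈ range (n+1), n.choose k ^ 2 * k.choose j = 0 := by
            apply Finset.sum_eq_zero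
            intro k hk
            simp only [mem_range, Nat.lt_succ_iff] at hk
            rw [Nat.choose_eq_zero_of_lt (show k < j by omega), mul_zero]
          rw [this, mul_zero]
    _ = ∑ j ∈ range (n+1), x.choose n * (n.choose j * (x - n).choose (n - j)) := by
        apply Finset.sum_congr rfl
        intro j hj
        simp only [mem_range, Nat.lt_succ_iff] at hj
        rw [lemA n j hj]
        have hsymm : (2*n - j).choose (n - j) = (2*n - j).choose n := by
          rw [← Nat.choose_symm (by omega : n ≤ 2*n - j)]
          congr 1
          omega
        rw [hsymm]
        rcases le_or_gt (2*n - j) x with hle | hlt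
        · rw [mul_left_comm, Nat.choose_mul (by omega : n ≤ 2*n - j)]
          have : 2*n - j - n = n - j := by omega
          rw [this]
          ring
        · rw [Nat.choose_eq_zero_of_lt hlt,
            Nat.choose_eq_zero_of_lt (by omega : x - n < n - j)]
          ring
    _ = x.choose n * ∑ j ∈ range (n+1), n.choose j * (x - n).choose (n - j) := by
        rw [Finset.mul_sum]
    _ = x.choose n ^ 2 := by
        rw [vand_range, (by omega : n + (x - n) = x), pow_two]

variable {K : ℕ}

/-- The type of `K`-tuples of naturals with sum `v`. -/
abbrev Mt (K v : ℕ) := {f : Fin K → ℕ // ∑ k, f k = v}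

/-- The type of lattice vectors with zero sum and ℓ¹-norm `2i`. -/
abbrev Zt (K i : ℕ) := {z : Fin K → ℤ // ∑ k, z k = 0 ∧ ∑ k, |z k| = 2*(i:ℤ)}

noncomputable def mtEquivSym (K v : ℕ) : Mt K v ≃ Sym (Fin K) v := by
  refine Equiv.subtypeEquiv
    (Finsupp.equivFunOnFinite.symm.trans (Multiset.toFinsupp.symm.toEquiv)) ?_
  intro f
  simp only [Equiv.trans_apply]
  have : (Multiset.toFinsupp.symm.toEquiv (Finsupp.equivFunOnFinite.symm f))
      = Finsupp.toMultiset (Finsupp.equivFunOnFinite.symm f) := rfl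
  rw [this]
  rw [Finsupp.card_toMultiset]
  rw [Finsupp.sum_fintype]
  · simp [Finsupp.equivFunOnFinite]; rfl
  · intro _; rfl

noncomputable instance (K v : ℕ) : Fintype (Mt K v) :=
  Fintype.ofEquiv _ (mtEquivSym K v).symm

lemma card_mt (K v : ℕ) (hK : 1 ≤ K) :
    Nat.card (Mt K v) = (v + (K-1)).choose (K-1) := by
  rw [Nat.card_eq_fintype_card, Fintype.card_congr (mtEquivSym K v),
    Sym.card_sym_eq_choose, Fintype.card_fin]
  have h1 : K + v - 1 = v + (K - 1) := by omega
  rw [h1, ← Nat.choose_symm (Nat.le_add_left _ _)]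
  congr 1
  omega

lemma abs_min_point (a b : ℕ) :
    |(a:ℤ) - b| = (a:ℤ) + b - 2 * (min a b : ℕ) := by
  rcases le_total a b with h | h
  · rw [min_eq_left h, abs_of_nonpos (by exact_mod_cast sub_nonpos.mpr (Int.ofNat_le.mpr h))]
    push_cast
    ring
  · rw [min_eq_right h, abs_of_nonneg (by exact_mod_cast sub_nonneg.mpr (Int.ofNat_le.mpr h))]
    push_cast
    ring

lemma abs_toNat_point (a : ℤ) : |a| = ((a.toNat : ℤ)) + ((-a).toNat : ℤ) := by
  rcases le_total 0 a with h | h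
  · rw [abs_of_nonneg h]; omega
  · rw [abs_of_nonpos h]; omega

/-- For `z` with zero sum and ℓ¹-norm `2i`, the positive and negative parts each sum to `i`. -/
lemma sum_toNat_eq {K i : ℕ} (z : Fin K → ℤ) (h0 : ∑ k, z k = 0)
    (h2 : ∑ k, |z k| = 2*(i:ℤ)) :
    (∑ k, (z k).toNat = i) ∧ (∑ k, (-(z k)).toNat = i) := by
  have key : (∑ k, ((z k).toNat : ℤ)) + (∑ k, (((-(z k)).toNat : ℤ))) = 2*(i:ℤ) := by
    rw [← Finset.sum_add_distrib, ← h2]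
    apply Finset.sum_congr rfl
    intro k _
    rw [abs_toNat_point (z k)]
  have key2 : (∑ k, ((z k).toNat : ℤ)) - (∑ k, (((-(z k)).toNat : ℤ))) = 0 := by
    rw [← Finset.sum_sub_distrib, ← h0]
    apply Finset.sum_congr rfl
    intro k _
    omega
  constructor
  · have h : (∑ k, ((z k).toNat : ℤ)) = i := by omega
    exact_mod_cast h
  · have h : (∑ k, (((-(z k)).toNat : ℤ))) = i := by omega
    exact_mod_cast h

noncomputable instance (K i : ℕ) : Fintype (Zt K i) := by
  apply Fintype.ofInjective
    (fun z : Zt K i => ((⟨fun k => (z.1 k).toNat, (sum_toNat_eq z.1 z.2.1 z.2.2).1⟩ : Mt K i),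
      (⟨fun k => (-(z.1 k)).toNat, (sum_toNat_eq z.1 z.2.1 z.2.2).2⟩ : Mt K i)))
  intro z w h
  simp only [Prod.mk.injEq, Subtype.mk.injEq] at h
  apply Subtype.ext
  funext k
  have h1 := congrFun h.1 k
  have h2 := congrFun h.2 k
  omega

section BigEquiv

variable (K d : ℕ)

abbrev PairT (K d : ℕ) :=
  {pq : (Fin K → ℕ) × (Fin K → ℕ) // (∑ k, pq.1 k = d) ∧ (∑ k, pq.2 k = d)}

abbrev SigT (K d : ℕ) := Σ i : Fin (d+1), Zt K i × Mt K (d - i)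

lemma min_sum_le (p q : Fin K → ℕ) (hp : ∑ k, p k = d) :
    ∑ k, min (p k) (q k) ≤ d := by
  rw [← hp]
  exact Finset.sum_le_sum fun k _ => min_le_left _ _

def toF : PairT K d → SigT K d := fun x =>
  ⟨⟨d - ∑ k, min (x.1.1 k) (x.1.2 k), by omega⟩,
    ⟨fun k => (x.1.1 k : ℤ) - x.1.2 k, by
      rw [Finset.sum_sub_distrib, ← Nat.cast_sum, ← Nat.cast_sum, x.2.1, x.2.2, sub_self], by
      have hs := min_sum_le K d x.1.1 x.1.2 x.2.1
      calc ∑ k, |(x.1.1 k : ℤ) - x.1.2 k|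
          = ∑ k, ((x.1.1 k : ℤ) + x.1.2 k - 2 * (min (x.1.1 k) (x.1.2 k) : ℕ)) :=
            Finset.sum_congr rfl fun k _ => abs_min_point _ _
        _ = (∑ k, (x.1.1 k : ℤ)) + (∑ k, (x.1.2 k : ℤ))
              - 2 * ∑ k, ((min (x.1.1 k) (x.1.2 k) : ℕ) : ℤ) := by
            rw [Finset.sum_sub_distrib, Finset.sum_add_distrib, ← Finset.mul_sum]
        _ = 2*(((d - ∑ k, min (x.1.1 k) (x.1.2 k) : ℕ) : ℕ) : ℤ) := by
            rw [← Nat.cast_sum, ← Nat.cast_sum, ← Nat.cast_sum, x.2.1, x.2.2]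
            push_cast [hs]
            ring⟩,
    ⟨fun k => min (x.1.1 k) (x.1.2 k), by
      have hs := min_sum_le K d x.1.1 x.1.2 x.2.1
      simp only []
      omega⟩⟩

def invF : SigT K d → PairT K d := fun y =>
  ⟨(fun k => (y.2.1.1 k).toNat + y.2.2.1 k, fun k => (-(y.2.1.1 k)).toNat + y.2.2.1 k), by
    have h1 := (sum_toNat_eq y.2.1.1 y.2.1.2.1 y.2.1.2.2).1
    have h2 := (sum_toNat_eq y.2.1.1 y.2.1.2.1 y.2.1.2.2).2
    have h3 := y.2.2.2
    have h4 := y.1.isLt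
    constructor <;>
      (rw [Finset.sum_add_distrib]; first | rw [h1, h3] | rw [h2, h3]) <;> omega⟩

lemma left_inv' : ∀ x, invF K d (toF K d x) = x := by
  intro x
  apply Subtype.ext
  apply Prod.ext <;> (funext k; simp only [invF, toF]; omega)

lemma invF_inj : Function.Injective (invF K d) := by
  rintro ⟨i, z, m⟩ ⟨i', z', m'⟩ h
  simp only [invF, Subtype.mk.injEq, Prod.mk.injEq] at h
  have hz : z.1 = z'.1 := by
    funext k
    have h1 := congrFun h.1 k
    have h2 := congrFun h.2 k
    omega
  have hi : i = i' := by
    apply Fin.ext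
    have e1 := z.2.2
    have e2 := z'.2.2
    rw [hz] at e1
    rw [e1] at e2
    omega
  subst hi
  have hm : m.1 = m'.1 := by
    funext k
    have h1 := congrFun h.1 k
    have h2 := congrFun h.2 k
    omega
  exact congrArg (fun w => (⟨i, w⟩ : SigT K d)) (Prod.ext (Subtype.ext hz) (Subtype.ext hm))

noncomputable def bigEquiv : PairT K d ≃ SigT K d where
  toFun := toF K d
  invFun := invF K d
  left_inv := left_inv' K d
  right_inv := fun y => invF_inj K d (left_inv' K d (invF K d y))

end BigEquiv

lemma B1 (K d : ℕ) (hK : 1 ≤ K) :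
    ∑ i ∈ range (d+1), Nat.card (Zt K i) * ((d - i) + (K-1)).choose (K-1)
      = ((d + (K-1)).choose (K-1))^2 := by
  have h1 : Nat.card (PairT K d) = ((d + (K-1)).choose (K-1))^2 := by
    rw [Nat.card_congr (Equiv.subtypeProdEquivProd
      (p := fun f : Fin K → ℕ => ∑ k, f k = d) (q := fun f : Fin K → ℕ => ∑ k, f k = d)),
      Nat.card_prod]
    have := card_mt K d hK
    rw [show Nat.card {a : Fin K → ℕ // ∑ k, a k = d} = Nat.card (Mt K d) from rfl, this,
      pow_two]
  rw [← h1, Nat.card_congr (bigEquiv K d), Nat.card_eq_fintype_card, Fintype.card_sigma]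
  rw [Fin.sum_univ_eq_sum_range (fun i => Fintype.card (Zt K i × Mt K (d - i)))]
  apply Finset.sum_congr rfl
  intro i _
  rw [Fintype.card_prod, ← Nat.card_eq_fintype_card, ← Nat.card_eq_fintype_card,
    card_mt K (d - i) hK]

lemma Z0 (K : ℕ) : Nat.card (Zt K 0) = 1 := by
  have : ∀ z : Zt K 0, z = ⟨0, by simp, by simp⟩ := by
    rintro ⟨z, h0, h2⟩
    apply Subtype.ext
    funext k
    have : ∀ j ∈ (univ : Finset (Fin K)), |z j| = 0 := by
      intro j _
      have hnn : ∀ j ∈ (univ : Finset (Fin K)), 0 ≤ |z j| := fun j _ => abs_nonneg _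
      have := (Finset.sum_eq_zero_iff_of_nonneg hnn).mp (by simpa using h2) j (mem_univ j)
      exact this
    have := this k
    simp only [mem_univ, abs_eq_zero, forall_const] at this
    exact this
  haveI : Unique (Zt K 0) := ⟨⟨⟨0, by simp, by simp⟩⟩, this⟩
  exact Nat.card_unique

lemma hockey (r m : ℕ) :
    ∑ i ∈ range (m+1), (i+r).choose r = (m + r + 1).choose (r+1) := by
  have h := Nat.sum_Icc_choose (m + r) r
  rw [← h, ← Finset.Ico_add_one_right_eq_Icc, Finset.sum_Ico_eq_sum_range]
  apply Finset.sum_congr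
  · congr 1
    omega
  · intro i _
    rw [add_comm r i]

lemma choose_le_pow' (r m : ℕ) : (m + r).choose r ≤ (m+1)^r := by
  induction r generalizing m with
  | zero => simp
  | succ r ih =>
    have hmr : m + (r+1) = m + r + 1 := by omega
    have h1 : (m + (r+1)).choose (r+1) = ∑ i ∈ range (m+1), (i+r).choose r := by
      rw [hmr, hockey]
    rw [h1]
    calc ∑ i ∈ range (m+1), (i+r).choose r
        ≤ ∑ _i ∈ range (m+1), (m+1)^r := by
          apply Finset.sum_le_sum
          intro i hi
          simp only [mem_range, Nat.lt_succ_iff] at hi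
          exact le_trans (ih i) (Nat.pow_le_pow_left (by omega) r)
      _ = (m+1)^(r+1) := by
          rw [Finset.sum_const, card_range]
          ring

lemma summable_aux (r : ℕ) {θ : ℝ} (hθ : |θ| < 1) :
    Summable (fun m : ℕ => ((m:ℝ)+1)^r * |θ|^m) := by
    have h1 : Summable (fun m : ℕ => (2:ℝ)^r * ((m:ℝ)^r * |θ|^m)) :=
      (summable_pow_mul_geometric_of_norm_lt_one (R := ℝ) r (r := |θ|) (by simpa using hθ)).mul_left _
    have h2 : Summable (fun m : ℕ => (2:ℝ)^r * |θ|^m) :=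
      (summable_geometric_of_lt_one (abs_nonneg θ) hθ).mul_left _
    apply Summable.of_nonneg_of_le (fun m => by positivity) _ (h1.add h2)
    intro m
    have hb : ((m:ℝ)+1)^r ≤ (2:ℝ)^r * (m:ℝ)^r + 2^r := by
      rcases Nat.eq_zero_or_pos m with hm | hm
      · subst hm
        simp only [Nat.cast_zero, zero_add, one_pow]
        have ha : (1:ℝ) ≤ 2^r := one_le_pow₀ (by norm_num)
        have hb' : (0:ℝ) ≤ 2^r * 0^r := by positivity
        linarith
      · have : ((m:ℝ)+1)^r ≤ (2*(m:ℝ))^r := by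
          apply pow_le_pow_left₀ (by positivity)
          have : (1:ℝ) ≤ m := by exact_mod_cast hm
          linarith
        rw [mul_pow] at this
        nlinarith [pow_nonneg (abs_nonneg θ) m, pow_pos (show (0:ℝ) < 2 by norm_num) r]
    calc ((m:ℝ)+1)^r * |θ|^m ≤ ((2:ℝ)^r * (m:ℝ)^r + 2^r) * |θ|^m := by
          apply mul_le_mul_of_nonneg_right hb (by positivity)
      _ = 2^r * ((m:ℝ)^r * |θ|^m) + 2^r * |θ|^m := by ring

lemma summable_norm_choose_mul (r : ℕ) {θ : ℝ} (hθ : |θ| < 1) :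
    Summable (fun m : ℕ => ‖((m+r).choose r : ℝ) * θ^m‖) := by
  apply Summable.of_nonneg_of_le (fun m => norm_nonneg _) _ (summable_aux r hθ)
  intro m
  rw [norm_mul, norm_pow, Real.norm_eq_abs, Real.norm_eq_abs]
  rw [Nat.abs_cast]
  apply mul_le_mul_of_nonneg_right _ (by positivity)
  have := choose_le_pow' r m
  calc (((m+r).choose r : ℕ) : ℝ) ≤ (((m+1)^r : ℕ) : ℝ) := by exact_mod_cast this
    _ = ((m:ℝ)+1)^r := by push_cast; ring

lemma summable_choose_mul (r : ℕ) {θ : ℝ} (hθ : |θ| < 1) :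
    Summable (fun m : ℕ => ((m+r).choose r : ℝ) * θ^m) :=
  (summable_norm_choose_mul r hθ).of_norm

lemma summable_norm_geom {θ : ℝ} (hθ : |θ| < 1) :
    Summable (fun m : ℕ => ‖θ^m‖) := by
  simp only [norm_pow, Real.norm_eq_abs]
  exact summable_geometric_of_lt_one (abs_nonneg θ) hθ

lemma tsum_g (r : ℕ) {θ : ℝ} (hθ : |θ| < 1) :
    ∑' m : ℕ, ((m+r).choose r : ℝ) * θ^m = ((1-θ)⁻¹)^(r+1) := by
  induction r with
  | zero =>
    simp only [Nat.add_zero, Nat.choose_zero_right, Nat.cast_one, one_mul, pow_one]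
    rw [pow_one]
    exact tsum_geometric_of_norm_lt_one (ξ := θ) (by simpa using hθ)
  | succ r ih =>
    have key : ∑' m : ℕ, ((m+(r+1)).choose (r+1) : ℝ) * θ^m
        = (∑' m : ℕ, ((m+r).choose r : ℝ) * θ^m) * (∑' m : ℕ, θ^m) := by
      rw [tsum_mul_tsum_eq_tsum_sum_antidiagonal_of_summable_norm
        (summable_norm_choose_mul r hθ) (summable_norm_geom hθ)]
      apply tsum_congr
      intro m
      rw [Finset.Nat.sum_antidiagonal_eq_sum_range_succ_mk]
      have : ∀ i ∈ range (m+1),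
          ((i+r).choose r : ℝ) * θ^i * θ^(m-i) = ((i+r).choose r : ℝ) * θ^m := by
        intro i hi
        simp only [mem_range, Nat.lt_succ_iff] at hi
        rw [mul_assoc, ← pow_add]
        congr 2
        omega
      rw [Finset.sum_congr rfl this, ← Finset.sum_mul, ← Nat.cast_sum, hockey,
        show m + r + 1 = m + (r+1) from by omega]
    rw [key, ih, tsum_geometric_of_norm_lt_one (ξ := θ) (by simpa using hθ), ← pow_succ]

lemma sur2 (n d : ℕ) :
    ∑ i ∈ range (n+1), n.choose i ^ 2 * (d + 2*n - i).choose (2*n)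
      = (d+n).choose n ^ 2 := by
  have h := suranyi n (d+n) (by omega)
  rw [← h, ← Finset.sum_range_reflect]
  apply Finset.sum_congr rfl
  intro i hi
  simp only [mem_range, Nat.lt_succ_iff] at hi
  have h1 : n + 1 - 1 - i = n - i := by omega
  rw [h1, Nat.choose_symm hi, show d + 2*n - (n - i) = d + n + i from by omega]

lemma coeff2 (n d : ℕ) :
    ∑ p ∈ Finset.HasAntidiagonal.antidiagonal d,
        (if p.1 ≤ n then n.choose p.1 ^ 2 else 0) * (p.2 + 2*n).choose (2*n)
      = (d+n).choose n ^ 2 := by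
  rw [Finset.Nat.sum_antidiagonal_eq_sum_range_succ_mk]
  set N := max n d with hN
  have e1 : ∑ k ∈ range (d+1),
        (if k ≤ n then n.choose k ^ 2 else 0) * (d - k + 2*n).choose (2*n)
      = ∑ k ∈ range (N+1),
        (if k ≤ n then n.choose k ^ 2 else 0) * (d + 2*n - k).choose (2*n) := by
    rw [Finset.sum_congr rfl (fun k hk => ?_)]
    · apply Finset.sum_subset
      · intro k hk; simp only [mem_range] at hk ⊢; omega
      · intro k hk hk'
        simp only [mem_range, Nat.lt_succ_iff] at hk hk'
        rw [Nat.choose_eq_zero_of_lt (show d + 2*n - k < 2*n from by omega), mul_zero]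
    · simp only [mem_range, Nat.lt_succ_iff] at hk
      rw [show d - k + 2*n = d + 2*n - k from by omega]
  have e2 : ∑ k ∈ range (n+1), n.choose k ^ 2 * (d + 2*n - k).choose (2*n)
      = ∑ k ∈ range (N+1),
        (if k ≤ n then n.choose k ^ 2 else 0) * (d + 2*n - k).choose (2*n) := by
    rw [Finset.sum_congr rfl (fun k hk => ?_)]
    · apply Finset.sum_subset
      · intro k hk; simp only [mem_range] at hk ⊢; omega
      · intro k hk hk'
        simp only [mem_range, Nat.lt_succ_iff] at hk hk'
        rw [if_neg (by omega), zero_mul]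
    · simp only [mem_range, Nat.lt_succ_iff] at hk
      rw [if_pos hk]
  show ∑ k ∈ range (d+1),
      (if k ≤ n then n.choose k ^ 2 else 0) * (d - k + 2*n).choose (2*n)
    = (d+n).choose n ^ 2
  rw [e1, ← e2, sur2]

lemma coeff1 (K d : ℕ) (hK : 1 ≤ K) :
    ∑ p ∈ Finset.HasAntidiagonal.antidiagonal d,
        Nat.card (Zt K p.1) * ((p.2 + (K-1)).choose (K-1))
      = ((d + (K-1)).choose (K-1))^2 := by
  rw [Finset.Nat.sum_antidiagonal_eq_sum_range_succ_mk]
  exact B1 K d hK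

theorem stmt_7 (K : ℕ) (hK : 2 ≤ K) (θ : ℝ) (hθ : |θ| < 1) :
    1 + ∑' d : ℕ,
        (Nat.card {z : Fin K → ℤ // ∑ k, z k = 0 ∧ ∑ k, |z k| = 2 * ((d : ℤ) + 1)} : ℝ)
          * θ ^ (d + 1) =
      (∑ j ∈ Finset.range K, ((K - 1).choose j : ℝ) ^ 2 * θ ^ j) / (1 - θ) ^ (K - 1) := by
  obtain ⟨n, rfl⟩ : ∃ n, K = n + 1 := ⟨K - 1, by omega⟩
  have hK1 : 1 ≤ n + 1 := by omega
  simp only [Nat.add_sub_cancel]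
  have h1θ : (1:ℝ) - θ ≠ 0 := by
    intro h
    have : θ = 1 := by linarith
    rw [this] at hθ
    norm_num at hθ
  have hZle : ∀ i : ℕ, Nat.card (Zt (n+1) i) ≤ (i+1)^(2*n) := by
    intro i
    have hb := B1 (n+1) i hK1
    simp only [Nat.add_sub_cancel] at hb
    have hterm : Nat.card (Zt (n+1) i) * ((i - i) + n).choose n ≤ (i + n).choose n ^ 2 := by
      rw [← hb]
      exact Finset.single_le_sum (f := fun j => Nat.card (Zt (n+1) j) * ((i - j) + n).choose n)
        (fun j _ => Nat.zero_le _) (Finset.self_mem_range_succ i)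
    rw [Nat.sub_self, Nat.zero_add, Nat.choose_self, mul_one] at hterm
    calc Nat.card (Zt (n+1) i) ≤ (i+n).choose n ^ 2 := hterm
      _ ≤ ((i+1)^n)^2 := Nat.pow_le_pow_left (choose_le_pow' n i) 2
      _ = (i+1)^(2*n) := by rw [← pow_mul, mul_comm]
  have hZnorm : Summable (fun i : ℕ => ‖(Nat.card (Zt (n+1) i) : ℝ) * θ^i‖) := by
    apply Summable.of_nonneg_of_le (fun i => norm_nonneg _) _ (summable_aux (2*n) hθ)
    intro i
    rw [norm_mul, norm_pow, Real.norm_eq_abs, Real.norm_eq_abs, Nat.abs_cast]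
    apply mul_le_mul_of_nonneg_right _ (by positivity)
    calc (Nat.card (Zt (n+1) i) : ℝ) ≤ (((i+1)^(2*n) : ℕ) : ℝ) := by exact_mod_cast hZle i
      _ = ((i:ℝ)+1)^(2*n) := by push_cast; ring
  have hZsum : Summable (fun i : ℕ => (Nat.card (Zt (n+1) i) : ℝ) * θ^i) := hZnorm.of_norm
  set s : ℕ → ℝ := fun i => (if i ≤ n then ((n.choose i : ℝ))^2 else 0) * θ^i with hs
  have hsnorm : Summable (fun i => ‖s i‖) := by
    apply summable_of_ne_finset_zero (s := Finset.range (n+1))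
    intro i hi
    simp only [Finset.mem_range, Nat.lt_succ_iff, not_le] at hi
    simp [hs, if_neg (by omega : ¬ i ≤ n)]
  have P1 : (∑' i : ℕ, (Nat.card (Zt (n+1) i) : ℝ) * θ^i) * ((1-θ)⁻¹)^(n+1)
      = ∑' d : ℕ, ((d+n).choose n : ℝ)^2 * θ^d := by
    rw [← tsum_g n hθ,
      tsum_mul_tsum_eq_tsum_sum_antidiagonal_of_summable_norm hZnorm
        (summable_norm_choose_mul n hθ)]
    apply tsum_congr
    intro d
    have e : ∀ p ∈ Finset.HasAntidiagonal.antidiagonal d,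
        ((Nat.card (Zt (n+1) p.1) : ℝ) * θ^p.1) * (((p.2+n).choose n : ℝ) * θ^p.2)
          = ((Nat.card (Zt (n+1) p.1) * ((p.2+n).choose n) : ℕ) : ℝ) * θ^d := by
      intro p hp
      rw [Finset.HasAntidiagonal.mem_antidiagonal] at hp
      push_cast
      rw [← hp, pow_add]
      ring
    rw [Finset.sum_congr rfl e, ← Finset.sum_mul, ← Nat.cast_sum]
    have hc := coeff1 (n+1) d hK1
    simp only [Nat.add_sub_cancel] at hc
    rw [hc]
    push_cast
    ring
  have P2 : (∑' i : ℕ, s i) * ((1-θ)⁻¹)^(2*n+1)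
      = ∑' d : ℕ, ((d+n).choose n : ℝ)^2 * θ^d := by
    rw [← tsum_g (2*n) hθ,
      tsum_mul_tsum_eq_tsum_sum_antidiagonal_of_summable_norm hsnorm
        (summable_norm_choose_mul (2*n) hθ)]
    apply tsum_congr
    intro d
    have e : ∀ p ∈ Finset.HasAntidiagonal.antidiagonal d,
        s p.1 * (((p.2+2*n).choose (2*n) : ℝ) * θ^p.2)
          = (((if p.1 ≤ n then (n.choose p.1)^2 else 0) * ((p.2+2*n).choose (2*n)) : ℕ) : ℝ)
              * θ^d := by
      intro p hp
      rw [Finset.HasAntidiagonal.mem_antidiagonal] at hp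
      simp only [hs]
      push_cast
      rw [← hp, pow_add]
      rcases le_or_gt p.1 n with h | h
      · ring
      · ring
    rw [Finset.sum_congr rfl e, ← Finset.sum_mul, ← Nat.cast_sum, coeff2]
    push_cast
    ring
  have hS : ∑' i : ℕ, s i = ∑ j ∈ Finset.range (n+1), ((n.choose j : ℝ))^2 * θ^j := by
    rw [tsum_eq_sum (s := Finset.range (n+1))]
    · apply Finset.sum_congr rfl
      intro j hj
      simp only [Finset.mem_range, Nat.lt_succ_iff] at hj
      simp only [hs, if_pos hj]
    · intro i hi
      simp only [Finset.mem_range, Nat.lt_succ_iff, not_le] at hi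
      simp [hs, if_neg (by omega : ¬ i ≤ n)]
  have hL : ∑' i : ℕ, (Nat.card (Zt (n+1) i) : ℝ) * θ^i
      = 1 + ∑' d : ℕ,
        (Nat.card {z : Fin (n+1) → ℤ // ∑ k, z k = 0 ∧ ∑ k, |z k| = 2 * ((d : ℤ) + 1)} : ℝ)
          * θ ^ (d + 1) := by
    rw [Summable.tsum_eq_zero_add hZsum]
    have h0 : (Nat.card (Zt (n+1) 0) : ℝ) * θ^0 = 1 := by
      rw [Z0]; simp
    rw [h0]
    refine congrArg (fun t => 1 + t) (tsum_congr fun d => ?_)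
    have hcard : Nat.card (Zt (n+1) (d+1))
        = Nat.card {z : Fin (n+1) → ℤ // ∑ k, z k = 0 ∧ ∑ k, |z k| = 2 * ((d : ℤ) + 1)} := by
      apply Nat.card_congr
      apply Equiv.subtypeEquivRight
      intro z
      rw [show (2 * (((d+1 : ℕ)):ℤ)) = 2 * ((d:ℤ) + 1) from by push_cast; ring]
    rw [hcard]
  rw [← hL]
  have ha : ((1-θ)⁻¹ : ℝ) ≠ 0 := inv_ne_zero h1θ
  apply mul_right_cancel₀ (pow_ne_zero (n+1) ha)
  rw [P1, ← hS, ← P2, div_eq_mul_inv, ← inv_pow, mul_assoc, ← pow_add,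
    show n + (n+1) = 2*n+1 from by omega]
end

section
/- With C_i^n, f_i, b_i as above (C_i^n = C(n,i)p^i(1-p)^{n-i}, f_i = 2Σ_{j≤i}C_j^nθ^{i-j}, b_i = 2Σ_{k≥i}C_k^nθ^{k-i}), the full sum satisfies Σ_{i=0}^n (f_i + b_i) = 4/(1-θ) − (2θ^{n+1}/(1-θ))·E[θ^{−X_n}] − (2θ/(1-θ))·E[θ^{X_n}], where X_n ~ Binomial(n,p); in particular Σ_{i=0}^n (f_i + b_i) → 4/(1-θ) as n → ∞. -/
open Finset

private lemma tri1 (c : ℕ → ℝ) (θ : ℝ) (n : ℕ) :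
    ∑ i ∈ range (n + 1), ∑ j ∈ range (i + 1), c j * θ ^ (i - j)
      = ∑ j ∈ range (n + 1), c j * ∑ m ∈ range (n + 1 - j), θ ^ m := by
  have hswap : ∑ i ∈ range (n + 1), ∑ j ∈ range (i + 1), c j * θ ^ (i - j)
      = ∑ j ∈ range (n + 1), ∑ i ∈ Icc j n, c j * θ ^ (i - j) := by
    refine Finset.sum_comm' ?_
    intro i j
    simp only [mem_range, mem_Icc]
    omega
  rw [hswap]
  refine Finset.sum_congr rfl fun j hj => ?_
  rw [Finset.mul_sum]
  have : Icc j n = Ico j (n + 1) := rfl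
  rw [this, Finset.sum_Ico_eq_sum_range]
  refine Finset.sum_congr rfl fun m hm => ?_
  have h : j + m - j = m := by omega
  rw [h]

private lemma tri2 (c : ℕ → ℝ) (θ : ℝ) (n : ℕ) :
    ∑ i ∈ range (n + 1), ∑ k ∈ Icc i n, c k * θ ^ (k - i)
      = ∑ k ∈ range (n + 1), c k * ∑ m ∈ range (k + 1), θ ^ m := by
  have hswap : ∑ i ∈ range (n + 1), ∑ k ∈ Icc i n, c k * θ ^ (k - i)
      = ∑ k ∈ range (n + 1), ∑ i ∈ range (k + 1), c k * θ ^ (k - i) := by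
    refine Finset.sum_comm' ?_
    intro i k
    simp only [mem_range, mem_Icc]
    omega
  rw [hswap]
  refine Finset.sum_congr rfl fun k hk => ?_
  have h := Finset.sum_range_reflect (fun m => θ ^ m) (k + 1)
  simp only [Nat.add_sub_cancel] at h
  rw [← Finset.mul_sum, h, Finset.mul_sum]

theorem stmt_18 (θ p : ℝ) (hθ : θ ∈ Set.Ioo (0 : ℝ) 1) (hp : p ∈ Set.Ioo (0 : ℝ) 1) :
    (∀ n : ℕ,
      ∑ i ∈ Finset.range (n + 1),
          ((2 * ∑ j ∈ Finset.range (i + 1),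
              (n.choose j : ℝ) * p ^ j * (1 - p) ^ (n - j) * θ ^ (i - j)) +
            (2 * ∑ k ∈ Finset.Icc i n,
              (n.choose k : ℝ) * p ^ k * (1 - p) ^ (n - k) * θ ^ (k - i))) =
        4 / (1 - θ) -
          (2 * θ ^ (n + 1) / (1 - θ)) *
            (∑ k ∈ Finset.range (n + 1),
              (n.choose k : ℝ) * p ^ k * (1 - p) ^ (n - k) * θ ^ (-(k : ℤ))) -
          (2 * θ / (1 - θ)) *
            (∑ k ∈ Finset.range (n + 1),
              (n.choose k : ℝ) * p ^ k * (1 - p) ^ (n - k) * θ ^ k)) ∧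
      Filter.Tendsto (fun n : ℕ =>
        ∑ i ∈ Finset.range (n + 1),
          ((2 * ∑ j ∈ Finset.range (i + 1),
              (n.choose j : ℝ) * p ^ j * (1 - p) ^ (n - j) * θ ^ (i - j)) +
            (2 * ∑ k ∈ Finset.Icc i n,
              (n.choose k : ℝ) * p ^ k * (1 - p) ^ (n - k) * θ ^ (k - i))))
        Filter.atTop (nhds (4 / (1 - θ))) := by
  obtain ⟨hθ0, hθ1⟩ := hθ
  obtain ⟨hp0, hp1⟩ := hp
  have hθne : θ ≠ 0 := ne_of_gt hθ0
  have hθne1 : θ ≠ 1 := ne_of_lt hθ1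
  have h1θ : (0:ℝ) < 1 - θ := by linarith
  have h1θne : (1:ℝ) - θ ≠ 0 := ne_of_gt h1θ
  -- binomial sum equals 1
  have hbin : ∀ n : ℕ, ∑ k ∈ range (n + 1),
      (n.choose k : ℝ) * p ^ k * (1 - p) ^ (n - k) = 1 := by
    intro n
    have h := add_pow p (1 - p) n
    have h2 : (p + (1 - p) : ℝ) = 1 := by ring
    rw [h2, one_pow] at h
    have h3 : ∑ k ∈ range (n + 1), (n.choose k : ℝ) * p ^ k * (1 - p) ^ (n - k)
        = ∑ m ∈ range (n + 1), p ^ m * (1 - p) ^ (n - m) * (n.choose m : ℝ) :=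
      Finset.sum_congr rfl fun k hk => by ring
    rw [h3, ← h]
  -- closed form for E[θ^X]
  have hE1 : ∀ n : ℕ, ∑ k ∈ range (n + 1),
      (n.choose k : ℝ) * p ^ k * (1 - p) ^ (n - k) * θ ^ k
      = (p * θ + (1 - p)) ^ n := by
    intro n
    rw [add_pow (p * θ) (1 - p) n]
    refine Finset.sum_congr rfl fun k hk => ?_
    rw [mul_pow]; ring
  -- closed form for θ^(n+1) E[θ^(-X)]
  have hE2 : ∀ n : ℕ, θ ^ (n + 1) * ∑ k ∈ range (n + 1),
      (n.choose k : ℝ) * p ^ k * (1 - p) ^ (n - k) * θ ^ (-(k : ℤ))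
      = θ * (p + (1 - p) * θ) ^ n := by
    intro n
    rw [Finset.mul_sum, add_pow p ((1 - p) * θ) n, Finset.mul_sum]
    refine Finset.sum_congr rfl fun k hk => ?_
    simp only [mem_range] at hk
    have hk' : k ≤ n := by omega
    have hz : θ ^ (n + 1) * θ ^ (-(k : ℤ)) = θ ^ (n + 1 - k) := by
      rw [← zpow_natCast θ (n + 1), ← zpow_add₀ hθne]
      have h4 : (((n + 1 : ℕ) : ℤ)) + (-(k:ℤ)) = ((n + 1 - k : ℕ) : ℤ) := by
        push_cast; omega
      rw [h4, zpow_natCast]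
    have hnk : n + 1 - k = (n - k) + 1 := by omega
    calc θ ^ (n + 1) * ((n.choose k : ℝ) * p ^ k * (1 - p) ^ (n - k) * θ ^ (-(k : ℤ)))
        = (n.choose k : ℝ) * p ^ k * (1 - p) ^ (n - k) * (θ ^ (n + 1) * θ ^ (-(k : ℤ))) := by
          ring
      _ = (n.choose k : ℝ) * p ^ k * (1 - p) ^ (n - k) * θ ^ ((n - k) + 1) := by
          rw [hz, hnk]
      _ = θ * (p ^ k * ((1 - p) * θ) ^ (n - k) * (n.choose k : ℝ)) := by
          rw [mul_pow]; ring
  -- main identity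
  have key : ∀ n : ℕ,
      ∑ i ∈ Finset.range (n + 1),
          ((2 * ∑ j ∈ Finset.range (i + 1),
              (n.choose j : ℝ) * p ^ j * (1 - p) ^ (n - j) * θ ^ (i - j)) +
            (2 * ∑ k ∈ Finset.Icc i n,
              (n.choose k : ℝ) * p ^ k * (1 - p) ^ (n - k) * θ ^ (k - i))) =
        4 / (1 - θ) -
          (2 * θ ^ (n + 1) / (1 - θ)) *
            (∑ k ∈ Finset.range (n + 1),
              (n.choose k : ℝ) * p ^ k * (1 - p) ^ (n - k) * θ ^ (-(k : ℤ))) -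
          (2 * θ / (1 - θ)) *
            (∑ k ∈ Finset.range (n + 1),
              (n.choose k : ℝ) * p ^ k * (1 - p) ^ (n - k) * θ ^ k) := by
    intro n
    set c : ℕ → ℝ := fun k => (n.choose k : ℝ) * p ^ k * (1 - p) ^ (n - k) with hc
    have geo : ∀ M : ℕ, ∑ m ∈ range M, θ ^ m = (1 - θ ^ M) / (1 - θ) := by
      intro M
      rw [geom_sum_eq hθne1]
      rw [div_eq_div_iff (by intro h; apply hθne1; linarith) h1θne]
      ring
    have step1 : ∑ i ∈ range (n + 1), ∑ j ∈ range (i + 1), c j * θ ^ (i - j)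
        = ∑ j ∈ range (n + 1), c j * ((1 - θ ^ (n + 1 - j)) / (1 - θ)) := by
      rw [tri1]
      exact Finset.sum_congr rfl fun j hj => by rw [geo]
    have step2 : ∑ i ∈ range (n + 1), ∑ k ∈ Icc i n, c k * θ ^ (k - i)
        = ∑ k ∈ range (n + 1), c k * ((1 - θ ^ (k + 1)) / (1 - θ)) := by
      rw [tri2]
      exact Finset.sum_congr rfl fun k hk => by rw [geo]
    have lhs_eq : ∑ i ∈ Finset.range (n + 1),
          ((2 * ∑ j ∈ Finset.range (i + 1), c j * θ ^ (i - j)) +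
            (2 * ∑ k ∈ Finset.Icc i n, c k * θ ^ (k - i)))
        = 2 * (∑ j ∈ range (n + 1), c j * ((1 - θ ^ (n + 1 - j)) / (1 - θ)))
          + 2 * (∑ k ∈ range (n + 1), c k * ((1 - θ ^ (k + 1)) / (1 - θ))) := by
      rw [Finset.sum_add_distrib, ← Finset.mul_sum, ← Finset.mul_sum, step1, step2]
    -- rewrite each of the two sums
    have t1 : ∑ j ∈ range (n + 1), c j * ((1 - θ ^ (n + 1 - j)) / (1 - θ))
        = 1 / (1 - θ) - (θ ^ (n + 1) / (1 - θ)) * ∑ j ∈ range (n + 1), c j * θ ^ (-(j : ℤ)) := by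
      have hterm : ∀ j ∈ range (n + 1),
          c j * ((1 - θ ^ (n + 1 - j)) / (1 - θ))
          = c j * (1 / (1 - θ)) - (θ ^ (n + 1) / (1 - θ)) * (c j * θ ^ (-(j : ℤ))) := by
        intro j hj
        simp only [mem_range] at hj
        have hz : (θ : ℝ) ^ (n + 1 - j) = θ ^ (n + 1) * θ ^ (-(j : ℤ)) := by
          rw [← zpow_natCast θ (n + 1 - j), ← zpow_natCast θ (n + 1), ← zpow_add₀ hθne]
          congr 1
          push_cast
          omega
        rw [hz]
        field_simp
      rw [Finset.sum_congr rfl hterm, Finset.sum_sub_distrib, ← Finset.sum_mul, hbin n,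
        ← Finset.mul_sum]
      ring
    have t2 : ∑ k ∈ range (n + 1), c k * ((1 - θ ^ (k + 1)) / (1 - θ))
        = 1 / (1 - θ) - (θ / (1 - θ)) * ∑ k ∈ range (n + 1), c k * θ ^ k := by
      have hterm : ∀ k ∈ range (n + 1),
          c k * ((1 - θ ^ (k + 1)) / (1 - θ))
          = c k * (1 / (1 - θ)) - (θ / (1 - θ)) * (c k * θ ^ k) := by
        intro k hk
        rw [pow_succ]
        field_simp
      rw [Finset.sum_congr rfl hterm, Finset.sum_sub_distrib, ← Finset.sum_mul, hbin n,
        ← Finset.mul_sum]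
      ring
    calc ∑ i ∈ Finset.range (n + 1),
          ((2 * ∑ j ∈ Finset.range (i + 1), c j * θ ^ (i - j)) +
            (2 * ∑ k ∈ Finset.Icc i n, c k * θ ^ (k - i)))
        = 2 * (1 / (1 - θ) - (θ ^ (n + 1) / (1 - θ)) * ∑ j ∈ range (n + 1), c j * θ ^ (-(j : ℤ)))
          + 2 * (1 / (1 - θ) - (θ / (1 - θ)) * ∑ k ∈ range (n + 1), c k * θ ^ k) := by
          rw [lhs_eq, t1, t2]
      _ = 4 / (1 - θ) -
          (2 * θ ^ (n + 1) / (1 - θ)) * (∑ k ∈ range (n + 1), c k * θ ^ (-(k : ℤ))) -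
          (2 * θ / (1 - θ)) * (∑ k ∈ range (n + 1), c k * θ ^ k) := by
          field_simp
          ring
  refine ⟨key, ?_⟩
  -- the limit
  have heq : ∀ n : ℕ,
      ∑ i ∈ Finset.range (n + 1),
          ((2 * ∑ j ∈ Finset.range (i + 1),
              (n.choose j : ℝ) * p ^ j * (1 - p) ^ (n - j) * θ ^ (i - j)) +
            (2 * ∑ k ∈ Finset.Icc i n,
              (n.choose k : ℝ) * p ^ k * (1 - p) ^ (n - k) * θ ^ (k - i)))
      = 4 / (1 - θ) - (2 / (1 - θ)) * (θ * (p + (1 - p) * θ) ^ n)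
        - (2 * θ / (1 - θ)) * (p * θ + (1 - p)) ^ n := by
    intro n
    rw [key n, hE1 n]
    have : (2 * θ ^ (n + 1) / (1 - θ)) *
        (∑ k ∈ Finset.range (n + 1),
          (n.choose k : ℝ) * p ^ k * (1 - p) ^ (n - k) * θ ^ (-(k : ℤ)))
        = (2 / (1 - θ)) * (θ * (p + (1 - p) * θ) ^ n) := by
      rw [← hE2 n]; ring
    rw [this]
  have ha : |p + (1 - p) * θ| < 1 := by
    rw [abs_lt]
    constructor <;> nlinarith
  have hb : |p * θ + (1 - p)| < 1 := by
    rw [abs_lt]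
    constructor <;> nlinarith
  have lim1 : Filter.Tendsto (fun n : ℕ => (p + (1 - p) * θ) ^ n) Filter.atTop (nhds 0) :=
    tendsto_pow_atTop_nhds_zero_of_abs_lt_one ha
  have lim2 : Filter.Tendsto (fun n : ℕ => (p * θ + (1 - p)) ^ n) Filter.atTop (nhds 0) :=
    tendsto_pow_atTop_nhds_zero_of_abs_lt_one hb
  have : Filter.Tendsto (fun n : ℕ =>
      4 / (1 - θ) - (2 / (1 - θ)) * (θ * (p + (1 - p) * θ) ^ n)
        - (2 * θ / (1 - θ)) * (p * θ + (1 - p)) ^ n) Filter.atTop (nhds (4 / (1 - θ))) := by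
    have h1 := ((lim1.const_mul θ).const_mul (2 / (1 - θ)))
    have h2 := lim2.const_mul (2 * θ / (1 - θ))
    have := (tendsto_const_nhds (x := (4 : ℝ) / (1 - θ)) (f := Filter.atTop (α := ℕ))).sub h1
      |>.sub h2
    simpa using this
  exact Filter.Tendsto.congr (fun n => (heq n).symm) this
end
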